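/- arXiv:2409.12458 — 4 statements merged into one kernel-verified Lean document; each statement's English description precedes it below -/
import Mathlib

section
/- Let m, n ≥ 1 with gcd(m,n) = 1, and let ℓ ≥ 0, with sequences j₀,…,j_ℓ and j'₀,…,j'_ℓ of natural numbers satisfying 0 ≤ jᵢ < n and 0 ≤ j'ᵢ < n for all i < ℓ. If j₀·m^ℓ + n·j₁·m^(ℓ-1) + ⋯ + n^(ℓ-1)·j_{ℓ-1}·m + n^ℓ·j_ℓ = j'₀·m^ℓ + n·j'₁·m^(ℓ-1) + ⋯ + n^(ℓ-1)·j'_{ℓ-1}·m + n^ℓ·j'_ℓ, then jᵢ = j'ᵢ for all i = 0, …, ℓ. -/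
/-!
Reducing the equation modulo `n` kills every term but `j₀ m^ℓ`; since `m` is invertible modulo `n`
and `j₀, j'₀ < n`, this gives `j₀ = j'₀`. Cancelling these terms and dividing by `n` leaves the same
equation of length `ℓ - 1` for the tails, and induction on `ℓ` finishes.
-/

open Finset

/-- The `(1,2)`-entry of the matrix of the normal form `b^{j₀} a b^{j₁} a ⋯ a b^{j_ℓ}`. -/
def mixedRadixSum (m n : ℕ) {ℓ : ℕ} (j : Fin (ℓ + 1) → ℕ) : ℕ :=
  ∑ i : Fin (ℓ + 1), n ^ (i : ℕ) * j i * m ^ (ℓ - (i : ℕ))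

lemma mixedRadixSum_succ (m n : ℕ) {ℓ : ℕ} (j : Fin (ℓ + 2) → ℕ) :
    mixedRadixSum m n j = j 0 * m ^ (ℓ + 1) + n * mixedRadixSum m n (Fin.tail j) := by
  rw [mixedRadixSum, mixedRadixSum, Fin.sum_univ_succ, mul_sum]
  congr 1
  · simp
  · refine sum_congr rfl fun i _ => ?_
    rw [Fin.val_succ, Nat.succ_sub_succ, pow_succ, Fin.tail]
    ring

lemma eq_and_eq_of_mul_pow_add_mul_eq {m n a a' b b' k : ℕ} (hmn : Nat.Coprime m n)
    (ha : a < n) (ha' : a' < n) (h : a * m ^ k + n * b = a' * m ^ k + n * b') :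
    a = a' ∧ b = b' := by
  have hmod : a * m ^ k ≡ a' * m ^ k [MOD n] := by
    simpa [Nat.ModEq, Nat.add_mul_mod_self_left] using congrArg (· % n) h
  have hcop : Nat.Coprime n (m ^ k) := (hmn.pow_left k).symm
  have haa' : a = a' := by
    simpa [Nat.ModEq, Nat.mod_eq_of_lt ha, Nat.mod_eq_of_lt ha'] using hmod.cancel_right_of_coprime hcop
  subst haa'
  exact ⟨rfl, Nat.eq_of_mul_eq_mul_left (a.zero_le.trans_lt ha) (Nat.add_left_cancel h)⟩

theorem mixedRadixSum_injective {m n : ℕ} (hmn : Nat.Coprime m n) :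
    ∀ {ℓ : ℕ} {j j' : Fin (ℓ + 1) → ℕ}, (∀ i : Fin (ℓ + 1), (i : ℕ) < ℓ → j i < n) →
      (∀ i : Fin (ℓ + 1), (i : ℕ) < ℓ → j' i < n) →
      mixedRadixSum m n j = mixedRadixSum m n j' → j = j'
  | 0, j, j', _, _, h => by
    ext i
    fin_cases i
    simpa [mixedRadixSum] using h
  | ℓ + 1, j, j', hj, hj', h => by
    rw [mixedRadixSum_succ, mixedRadixSum_succ] at h
    obtain ⟨hhead, htail⟩ :=
      eq_and_eq_of_mul_pow_add_mul_eq hmn (hj 0 ℓ.succ_pos) (hj' 0 ℓ.succ_pos) h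
    have htail' : Fin.tail j = Fin.tail j' :=
      mixedRadixSum_injective hmn (fun i hi => hj i.succ (Nat.succ_lt_succ hi))
        (fun i hi => hj' i.succ (Nat.succ_lt_succ hi)) htail
    rw [← Fin.cons_self_tail j, ← Fin.cons_self_tail j', hhead, htail']

theorem stmt_3_general (m n : ℕ) (hmn : Nat.gcd m n = 1)
    (ℓ : ℕ) (j j' : Fin (ℓ + 1) → ℕ)
    (hj : ∀ i : Fin (ℓ + 1), (i : ℕ) < ℓ → j i < n)
    (hj' : ∀ i : Fin (ℓ + 1), (i : ℕ) < ℓ → j' i < n)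
    (hsum : ∑ i : Fin (ℓ + 1), n ^ (i : ℕ) * j i * m ^ (ℓ - (i : ℕ)) =
      ∑ i : Fin (ℓ + 1), n ^ (i : ℕ) * j' i * m ^ (ℓ - (i : ℕ))) :
    ∀ i : Fin (ℓ + 1), j i = j' i :=
  congrFun (mixedRadixSum_injective hmn hj hj' hsum)

theorem stmt_3 (m n : ℕ) (hm : 1 ≤ m) (hn : 1 ≤ n) (hmn : Nat.gcd m n = 1)
    (ℓ : ℕ) (j j' : Fin (ℓ + 1) → ℕ)
    (hj : ∀ i : Fin (ℓ + 1), (i : ℕ) < ℓ → j i < n)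
    (hj' : ∀ i : Fin (ℓ + 1), (i : ℕ) < ℓ → j' i < n)
    (hsum : ∑ i : Fin (ℓ + 1), n ^ (i : ℕ) * j i * m ^ (ℓ - (i : ℕ)) =
      ∑ i : Fin (ℓ + 1), n ^ (i : ℕ) * j' i * m ^ (ℓ - (i : ℕ))) :
    ∀ i : Fin (ℓ + 1), j i = j' i :=
  stmt_3_general m n hmn ℓ j j' hj hj' hsum
end

section
/- Let P be a submonoid of a group G. For finite words α = (p₁,…,p_{2k}) in P, define the iterated quotient set Q(α) = {e, p_{2k}⁻¹p_{2k-1}, p_{2k}⁻¹p_{2k-1}p_{2k-2}⁻¹p_{2k-3}, …} ⊆ G and the constructible set K(α) = ⋂_{g ∈ Q(α)} (gP ∩ P) ⊆ P. Then for the reversed word α̃ = (p_{2k}, p_{2k-1}, …, p₂, p₁) one has K(α̃) = K(α), provided α is neutral (i.e. p₁⁻¹p₂⋯p_{2k-1}⁻¹p_{2k} = e in G). -/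
/-- The alternating product `p₁⁻¹p₂⋯p_{2k-1}⁻¹p_{2k}` of a word, given as a list of
pairs `[(p₁,p₂),…,(p_{2k-1},p_{2k})]`. -/
def wordProd {G : Type*} [Group G] (w : List (G × G)) : G :=
  (w.map fun x => x.1⁻¹ * x.2).prod

/-- The iterated quotient set `Q(α) = {e, p_{2k}⁻¹p_{2k-1}, p_{2k}⁻¹p_{2k-1}p_{2k-2}⁻¹p_{2k-3}, …}`. -/
def quotSet {G : Type*} [Group G] (w : List (G × G)) : Set G :=
  Set.range fun j : ℕ => ((w.reverse.take j).map fun x => x.2⁻¹ * x.1).prod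

/-- The constructible set `K(α) = ⋂_{g ∈ Q(α)} (gP ∩ P)`, as a subset of `G`. -/
def KSet {G : Type*} [Group G] (P : Submonoid G) (w : List (G × G)) : Set G :=
  {x : G | x ∈ P ∧ ∀ g ∈ quotSet w, ∃ p ∈ P, x = g * p}

/-!
The elements of `Q(α)` are the inverses of the suffix products of `α`, while those of `Q(α̃)`
are the prefix products of `α`. When `α` is neutral, each prefix product is the inverse of the
complementary suffix product, so `Q(α̃) = Q(α)`; and `K` depends on the word only through `Q`.
-/

section WordProd

variable {G : Type*} [Group G]

theorem wordProd_append (u v : List (G × G)) :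
    wordProd (u ++ v) = wordProd u * wordProd v := by
  simp [wordProd]

theorem wordProd_take_eq_inv_wordProd_drop {w : List (G × G)} (hw : wordProd w = 1) (j : ℕ) :
    wordProd (w.take j) = (wordProd (w.drop j))⁻¹ := by
  rw [eq_inv_iff_mul_eq_one, ← wordProd_append, List.take_append_drop, hw]

theorem quotSet_eq_range_inv_wordProd_drop (w : List (G × G)) :
    quotSet w = Set.range fun j => (wordProd (w.drop j))⁻¹ := by
  have hprod (j : ℕ) : ((w.reverse.take j).map fun x => x.2⁻¹ * x.1).prod
      = (wordProd (w.drop (w.length - j)))⁻¹ := by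
    rw [List.take_reverse, List.map_reverse, List.prod_reverse_noncomm]
    simp [wordProd, Function.comp_def]
  ext g
  constructor
  · rintro ⟨j, rfl⟩
    exact ⟨w.length - j, (hprod j).symm⟩
  · rintro ⟨j, rfl⟩
    refine ⟨w.length - j, ?_⟩
    rcases le_total j w.length with hj | hj
    · simp only [hprod, Nat.sub_sub_self hj]
    · simp only [hprod, Nat.sub_eq_zero_of_le hj, Nat.sub_zero, List.drop_length,
        List.drop_of_length_le hj]

theorem quotSet_reverse_map_swap (w : List (G × G)) :
    quotSet (w.reverse.map Prod.swap) = Set.range fun j => wordProd (w.take j) := by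
  simp [quotSet, wordProd, List.map_take, Function.comp_def]

end WordProd

theorem stmt_6_general {G : Type*} [Group G] (P : Submonoid G) (w : List (G × G))
    (hneutral : wordProd w = 1) :
    KSet P (w.reverse.map Prod.swap) = KSet P w := by
  have hquot : quotSet (w.reverse.map Prod.swap) = quotSet w := by
    rw [quotSet_reverse_map_swap, quotSet_eq_range_inv_wordProd_drop]
    simp only [wordProd_take_eq_inv_wordProd_drop hneutral]
  simp only [KSet, hquot]

theorem stmt_6 {G : Type*} [Group G] (P : Submonoid G) (w : List (G × G))
    (hw : ∀ x ∈ w, x.1 ∈ P ∧ x.2 ∈ P) (hneutral : wordProd w = 1) :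
    KSet P (w.reverse.map Prod.swap) = KSet P w :=
  stmt_6_general P w hneutral
end

section
/- Let P be a submonoid of a group and suppose the family of constructible right ideals 𝔍 has the property: for S₁, S₂ ∈ 𝔍 with S₁ ⊊ S₂ and any s₁ ∈ S₁, there exists s₂ ∈ S₂ \ S₁ with s₂ ≤ s₁. Then for any S, S₁, …, S_n ∈ 𝔍 with S \ (S₁ ∪ ⋯ ∪ S_n) nonempty, and any s ∈ ⋃ⱼ (S ∩ Sⱼ), there exists s̄ ∈ S \ (S₁ ∪ ⋯ ∪ S_n) with s̄ ≤ s. -/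
/-!
Every element `s` of `S` that lies in some `Sᵢ` can be pushed down: since `S ∩ Sᵢ ⊊ S`, the
hypothesis yields `s' ≤ s` in `S \ Sᵢ`. As the `Sⱼ` are right ideals, `s'` lies only in those `Sⱼ`
that contain `s`, so it lies in strictly fewer of them, and finitely many such steps leave the union.
-/

namespace Submonoid

variable {G : Type*} [Group G] (P : Submonoid G)

/-- The order `a ≤ b :↔ b ∈ aP` of the paper. -/
def LeftDivides (a b : G) : Prop := ∃ t ∈ P, b = a * t

variable {P}

theorem LeftDivides.refl (a : G) : P.LeftDivides a a := ⟨1, P.one_mem, (mul_one a).symm⟩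

theorem LeftDivides.trans {a b c : G} (hab : P.LeftDivides a b) (hbc : P.LeftDivides b c) :
    P.LeftDivides a c := by
  obtain ⟨t, ht, rfl⟩ := hab
  obtain ⟨u, hu, rfl⟩ := hbc
  exact ⟨t * u, P.mul_mem ht hu, mul_assoc a t u⟩

theorem LeftDivides.mem {T : Set G} (hT : ∀ s ∈ T, ∀ p ∈ P, s * p ∈ T) {a b : G}
    (hab : P.LeftDivides a b) (ha : a ∈ T) : b ∈ T := by
  obtain ⟨t, ht, rfl⟩ := hab
  exact hT a ha t ht

section Descent

variable {𝔍 : Set (Set G)}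
  (hcap : ∀ S ∈ 𝔍, ∀ T ∈ 𝔍, S ∩ T ∈ 𝔍)
  (hprop : ∀ S₁ ∈ 𝔍, ∀ S₂ ∈ 𝔍, S₁ ⊂ S₂ → ∀ s₁ ∈ S₁, ∃ s₂ ∈ S₂ \ S₁, P.LeftDivides s₂ s₁)
include hcap hprop

theorem exists_leftDivides_mem_diff {S T : Set G} (hS : S ∈ 𝔍) (hT : T ∈ 𝔍)
    (hne : (S \ T).Nonempty) {s : G} (hs : s ∈ S ∩ T) :
    ∃ s' ∈ S \ T, P.LeftDivides s' s := by
  have hssub : S ∩ T ⊂ S :=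
    Set.inter_ssubset_left_iff.mpr fun h ↦ hne.elim fun x hx ↦ hx.2 (h hx.1)
  obtain ⟨s', ⟨hs'S, hs'T⟩, hs'⟩ := hprop _ (hcap S hS T hT) S hS hssub s hs
  exact ⟨s', ⟨hs'S, fun h ↦ hs'T ⟨hs'S, h⟩⟩, hs'⟩

variable (hideal : ∀ S ∈ 𝔍, ∀ s ∈ S, ∀ p ∈ P, s * p ∈ S)
include hideal

theorem exists_leftDivides_mem_diff_iUnion {ι : Type*} [Finite ι] {S : Set G} (hS : S ∈ 𝔍)
    {Si : ι → Set G} (hSi : ∀ i, Si i ∈ 𝔍) (hne : (S \ ⋃ i, Si i).Nonempty) {s : G}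
    (hs : s ∈ S) : ∃ sbar ∈ S \ ⋃ i, Si i, P.LeftDivides sbar s := by
  -- Induction on a finite set `I` of indices containing all `Sᵢ` that contain `s`.
  suffices key : ∀ I : Set ι, I.Finite → ∀ s ∈ S, {i | s ∈ Si i} ⊆ I →
      ∃ sbar ∈ S \ ⋃ i, Si i, P.LeftDivides sbar s from
    key Set.univ Set.finite_univ s hs (Set.subset_univ _)
  intro I hI
  induction I, hI using Set.Finite.induction_on with
  | empty =>
    intro s hs hsI
    refine ⟨s, ⟨hs, fun hU ↦ ?_⟩, LeftDivides.refl s⟩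
    obtain ⟨i, hi⟩ := Set.mem_iUnion.mp hU
    exact hsI hi
  | @insert j I _ _ ih =>
    intro s hs hsI
    by_cases hsj : s ∈ Si j
    · have hne_j : (S \ Si j).Nonempty :=
        hne.mono (Set.sdiff_subset_sdiff_right (Set.subset_iUnion Si j))
      obtain ⟨s', ⟨hs'S, hs'j⟩, hs's⟩ :=
        exists_leftDivides_mem_diff hcap hprop hS (hSi j) hne_j ⟨hs, hsj⟩
      have hs'I : {i | s' ∈ Si i} ⊆ I := fun i hi ↦
        (hsI (hs's.mem (hideal _ (hSi i)) hi)).resolve_left fun h ↦ hs'j (h ▸ hi)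
      obtain ⟨sbar, hsbar, hsbar_s'⟩ := ih s' hs'S hs'I
      exact ⟨sbar, hsbar, hsbar_s'.trans hs's⟩
    · exact ih s hs fun i hi ↦ (hsI hi).resolve_left fun h ↦ hsj (h ▸ hi)

end Descent

end Submonoid

theorem stmt_11_general {G : Type*} [Group G] (P : Submonoid G) (𝔍 : Set (Set G))
    (hideal : ∀ S ∈ 𝔍, ∀ s ∈ S, ∀ p ∈ P, s * p ∈ S)
    (hcap : ∀ S ∈ 𝔍, ∀ T ∈ 𝔍, S ∩ T ∈ 𝔍)
    (hprop : ∀ S₁ ∈ 𝔍, ∀ S₂ ∈ 𝔍, S₁ ⊂ S₂ → ∀ s₁ ∈ S₁,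
      ∃ s₂ ∈ S₂ \ S₁, ∃ t ∈ P, s₁ = s₂ * t)
    (S : Set G) (hS : S ∈ 𝔍) (nn : ℕ) (Si : Fin nn → Set G) (hSi : ∀ i, Si i ∈ 𝔍)
    (hne : (S \ ⋃ i, Si i).Nonempty) :
    ∀ s ∈ ⋃ i, S ∩ Si i, ∃ sbar ∈ S \ ⋃ i, Si i, ∃ t ∈ P, s = sbar * t := by
  intro s hs
  obtain ⟨i, hsS, -⟩ := Set.mem_iUnion.mp hs
  exact Submonoid.exists_leftDivides_mem_diff_iUnion hcap hprop hideal hS hSi hne hsS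

theorem stmt_11 {G : Type*} [Group G] (P : Submonoid G) (𝔍 : Set (Set G))
    (hsub : ∀ S ∈ 𝔍, S ⊆ (P : Set G))
    (hideal : ∀ S ∈ 𝔍, ∀ s ∈ S, ∀ p ∈ P, s * p ∈ S)
    (hcap : ∀ S ∈ 𝔍, ∀ T ∈ 𝔍, S ∩ T ∈ 𝔍)
    (hprop : ∀ S₁ ∈ 𝔍, ∀ S₂ ∈ 𝔍, S₁ ⊂ S₂ → ∀ s₁ ∈ S₁,
      ∃ s₂ ∈ S₂ \ S₁, ∃ t ∈ P, s₁ = s₂ * t)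
    (S : Set G) (hS : S ∈ 𝔍) (nn : ℕ) (Si : Fin nn → Set G) (hSi : ∀ i, Si i ∈ 𝔍)
    (hne : (S \ ⋃ i, Si i).Nonempty) :
    ∀ s ∈ ⋃ i, S ∩ Si i, ∃ sbar ∈ S \ ⋃ i, Si i, ∃ t ∈ P, s = sbar * t :=
  stmt_11_general P 𝔍 hideal hcap hprop S hS nn Si hSi hne
end

section
/- In the monoid BS⁺(m,n) with m ≥ 1 and n ≥ 1, if p and q have a common upper bound (i.e. pBS⁺(m,n) ∩ qBS⁺(m,n) ≠ ∅) and θ(p) ≤ θ(q), then stem(p) is a prefix of stem(q), where θ denotes the height (number of occurrences of a in any word representing the element) and stem(p) = b^{c₀}a⋯b^{c_{k-1}}a for the normal form p = b^{c₀}a b^{c₁}⋯b^{c_{k-1}}a b^{c_k}. -/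
/-- The defining relation `a b^m = b^n a` of the Baumslag–Solitar monoid, on the free
monoid on two generators `0 = a`, `1 = b`. -/
def BSRel (m n : ℕ) (x y : FreeMonoid (Fin 2)) : Prop :=
  x = FreeMonoid.of 0 * FreeMonoid.of 1 ^ m ∧ y = FreeMonoid.of 1 ^ n * FreeMonoid.of 0

/-- The Baumslag–Solitar monoid `BS⁺(m,n) = ⟨a, b ∣ a b^m = b^n a⟩⁺`. -/
abbrev BSplus (m n : ℕ) := PresentedMonoid (BSRel m n)

/-- The generator `a` of `BS⁺(m,n)`. -/
def bsA (m n : ℕ) : BSplus m n := PresentedMonoid.of (BSRel m n) 0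

/-- The generator `b` of `BS⁺(m,n)`. -/
def bsB (m n : ℕ) : BSplus m n := PresentedMonoid.of (BSRel m n) 1

/-- The stem `b^{c₀}a b^{c₁}a ⋯ b^{c_{k-1}}a` associated to a digit sequence `c`. -/
def bsStem (m n k : ℕ) (c : Fin k → ℕ) : BSplus m n :=
  (List.ofFn fun i : Fin k => bsB m n ^ (c i) * bsA m n).prod

/-! Right multiplication by `a` and `b` acts on normal forms, and it only ever appends digits to
the stem. So the normal form of any right multiple of `bsStem c` has the digits `c` as a prefix,
and a common right multiple of two stems gives a digit list of which both digit sequences are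
prefixes; the shorter one is then a prefix of the longer one. -/

namespace BSplus

/-- The pair `(ds, t)` encodes the normal form `b^{ds₀} a ⋯ b^{ds_{k-1}} a b^t`; right
multiplication by `a` uses `b^t a = b^{t % n} a b^{m (t / n)}`. -/
def rightActA (m n : ℕ) : Function.End (List ℕ × ℕ) := fun s => (s.1 ++ [s.2 % n], m * (s.2 / n))

def rightActB : Function.End (List ℕ × ℕ) := fun s => (s.1, s.2 + 1)

theorem rightActB_pow_apply (j : ℕ) (s : List ℕ × ℕ) : (rightActB ^ j) s = (s.1, s.2 + j) := by
  induction j generalizing s with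
  | zero => rfl
  | succ j ih =>
    rw [pow_succ]
    exact (ih _).trans (by simp [rightActB, add_assoc, add_comm 1])

def rightAction (m n : ℕ) (hn : 1 ≤ n) : BSplus m n →* (Function.End (List ℕ × ℕ))ᵐᵒᵖ :=
  PresentedMonoid.lift ![.op (rightActA m n), .op rightActB] <| by
    rintro x y ⟨rfl, rfl⟩
    apply MulOpposite.unop_injective
    funext s
    simp only [map_mul, map_pow, FreeMonoid.lift_eval_of, MulOpposite.unop_mul,
      MulOpposite.unop_pow]
    change (rightActB ^ m) (rightActA m n s) = rightActA m n ((rightActB ^ n) s)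
    simp [rightActA, rightActB_pow_apply, Nat.add_div_right _ hn, mul_add]

section

variable {m n : ℕ} {hn : 1 ≤ n}

theorem rightAction_mul_apply (p q : BSplus m n) (s : List ℕ × ℕ) :
    (rightAction m n hn (p * q)).unop s =
      (rightAction m n hn q).unop ((rightAction m n hn p).unop s) := by
  rw [map_mul, MulOpposite.unop_mul]
  rfl

theorem rightAction_bsA_apply (s : List ℕ × ℕ) :
    (rightAction m n hn (bsA m n)).unop s = (s.1 ++ [s.2 % n], m * (s.2 / n)) :=
  rfl

theorem rightAction_bsB_pow_apply (j : ℕ) (s : List ℕ × ℕ) :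
    (rightAction m n hn (bsB m n ^ j)).unop s = (s.1, s.2 + j) := by
  rw [map_pow, MulOpposite.unop_pow]
  exact rightActB_pow_apply j s

theorem rightAction_bsStem_apply (k : ℕ) (c : Fin k → ℕ) (hc : ∀ i, c i < n) (ds : List ℕ) :
    (rightAction m n hn (bsStem m n k c)).unop (ds, 0) = (ds ++ List.ofFn c, 0) := by
  induction k generalizing ds with
  | zero => simp only [bsStem, List.ofFn_zero, List.prod_nil, map_one, List.append_nil]; rfl
  | succ k ih =>
    rw [bsStem, List.ofFn_succ, List.prod_cons, rightAction_mul_apply, rightAction_mul_apply,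
      rightAction_bsB_pow_apply, rightAction_bsA_apply]
    simp only [zero_add, Nat.mod_eq_of_lt (hc 0), Nat.div_eq_of_lt (hc 0), mul_zero]
    exact (ih _ (fun i => hc i.succ) _).trans (by simp [List.ofFn_succ])

theorem prefix_rightAction_apply (p : BSplus m n) (s : List ℕ × ℕ) :
    s.1 <+: ((rightAction m n hn p).unop s).1 := by
  induction p using PresentedMonoid.inductionOn with | h w => ?_
  induction w using FreeMonoid.inductionOn' generalizing s with
  | one => exact List.prefix_refl _
  | of_mul i w ih =>
    rw [map_mul, rightAction_mul_apply]
    refine List.IsPrefix.trans ?_ (ih _)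
    fin_cases i
    · exact List.prefix_append _ _
    · exact List.prefix_refl _

end

theorem ofFn_prefix_of_bsStem_mul_eq {m n : ℕ} (hn : 1 ≤ n) {k l : ℕ} {c : Fin k → ℕ}
    {d : Fin l → ℕ} (hc : ∀ i, c i < n) (hd : ∀ i, d i < n) (hkl : k ≤ l) {x y : BSplus m n}
    (h : bsStem m n k c * x = bsStem m n l d * y) : List.ofFn c <+: List.ofFn d := by
  have key := congrArg (fun p => ((rightAction m n hn p).unop ([], 0)).1) h
  simp only [rightAction_mul_apply, rightAction_bsStem_apply _ _ hc,
    rightAction_bsStem_apply _ _ hd, List.nil_append] at key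
  exact List.prefix_of_prefix_length_le
    (prefix_rightAction_apply (hn := hn) x (List.ofFn c, 0))
    (key ▸ prefix_rightAction_apply (hn := hn) y (List.ofFn d, 0)) (by simpa)

theorem bsStem_add {m n : ℕ} (k r : ℕ) (d : Fin (k + r) → ℕ) :
    bsStem m n (k + r) d = bsStem m n k (fun i => d (Fin.castLE (Nat.le_add_right k r) i)) *
      bsStem m n r (fun i => d (Fin.natAdd k i)) := by
  simp only [bsStem, List.ofFn_add, List.prod_append]

end BSplus

theorem stmt_18_general (m n : ℕ) (hn : 1 ≤ n)
    (k l : ℕ) (c : Fin k → ℕ) (ck : ℕ) (d : Fin l → ℕ) (dl : ℕ)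
    (hc : ∀ i, c i ≤ n - 1) (hd : ∀ i, d i ≤ n - 1) (hkl : k ≤ l)
    (hub : ∃ x y : BSplus m n,
      bsStem m n k c * bsB m n ^ ck * x = bsStem m n l d * bsB m n ^ dl * y) :
    ∃ w : BSplus m n, bsStem m n l d = bsStem m n k c * w := by
  obtain ⟨r, rfl⟩ := Nat.exists_eq_add_of_le hkl
  obtain ⟨x, y, hxy⟩ := hub
  have hc' : ∀ i, c i < n := fun i => by have := hc i; omega
  have hd' : ∀ i, d i < n := fun i => by have := hd i; omega
  have hpre := BSplus.ofFn_prefix_of_bsStem_mul_eq hn hc' hd' hkl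
    (by simpa only [mul_assoc] using hxy)
  rw [List.ofFn_add] at hpre
  have hcd : c = fun i => d (Fin.castLE (Nat.le_add_right k r) i) :=
    List.ofFn_injective <|
      (List.prefix_of_prefix_length_le hpre (List.prefix_append _ _) (by simp)).eq_of_length
        (by simp)
  exact ⟨_, by rw [BSplus.bsStem_add, hcd]⟩

theorem stmt_18 (m n : ℕ) (hm : 1 ≤ m) (hn : 1 ≤ n)
    (k l : ℕ) (c : Fin k → ℕ) (ck : ℕ) (d : Fin l → ℕ) (dl : ℕ)
    (hc : ∀ i, c i ≤ n - 1) (hd : ∀ i, d i ≤ n - 1) (hkl : k ≤ l)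
    (hub : ∃ x y : BSplus m n,
      bsStem m n k c * bsB m n ^ ck * x = bsStem m n l d * bsB m n ^ dl * y) :
    ∃ w : BSplus m n, bsStem m n l d = bsStem m n k c * w :=
  stmt_18_general m n hn k l c ck d dl hc hd hkl hub
end
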